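/- Let F be a field and let M(x)=[A(x)|B(x)] be a bipartite pattern matrix in n unknowns with generic ranks r_A, r_B, r_M. Let 𝒜 be a largest left matchbox and ℬ a largest right matchbox such that v(𝒜,ℬ) is minimal among all pairs consisting of a largest left matchbox and a largest right matchbox. Then rank A(ε_{𝒜∪ℬ}) = |𝒜| = r_A, rank B(ε_{𝒜∪ℬ}) = |ℬ| = r_B, and rank M(ε_{𝒜∪ℬ}) = |𝒜⋓ℬ| = r_M, where the ranks are over F. -/

import Mathlib

open Matrix

/-- A position in the bipartite pattern: either an entry of the `m × p` A-block
or an entry of the `m × q` B-block. -/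
abbrev BipPos (m p q : ℕ) := (Fin m × Fin p) ⊕ (Fin m × Fin q)

/-- The row index of a position. -/
def posRow {m p q : ℕ} : BipPos m p q → Fin m := Sum.elim Prod.fst Prod.fst

/-- The column index of a position (as a column of the block matrix `[A|B]`). -/
def posCol {m p q : ℕ} : BipPos m p q → Fin p ⊕ Fin q := Sum.map Prod.snd Prod.snd

/-- The A-block of the pattern matrix, at the substitution `a`. -/
def patA {m p q n : ℕ} (pos : Fin n → BipPos m p q) {R : Type*} [CommRing R]
    (a : Fin n → R) : Matrix (Fin m) (Fin p) R :=
  Matrix.of fun i j => ∑ l : Fin n, if pos l = Sum.inl (i, j) then a l else 0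

/-- The B-block of the pattern matrix, at the substitution `a`. -/
def patB {m p q n : ℕ} (pos : Fin n → BipPos m p q) {R : Type*} [CommRing R]
    (a : Fin n → R) : Matrix (Fin m) (Fin q) R :=
  Matrix.of fun i k => ∑ l : Fin n, if pos l = Sum.inr (i, k) then a l else 0

/-- The full bipartite pattern matrix `M = [A | B]` at the substitution `a`. -/
def patM {m p q n : ℕ} (pos : Fin n → BipPos m p q) {R : Type*} [CommRing R]
    (a : Fin n → R) : Matrix (Fin m) (Fin p ⊕ Fin q) R :=
  Matrix.fromCols (patA pos a) (patB pos a)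

/-- The generic point: the variables `x₁, …, xₙ` viewed in the field
`K = F(x₁,…,xₙ)` of rational functions. -/
noncomputable def genericX (F : Type*) [Field F] (n : ℕ) :
    Fin n → FractionRing (MvPolynomial (Fin n) F) :=
  fun l => algebraMap (MvPolynomial (Fin n) F) (FractionRing (MvPolynomial (Fin n) F))
    (MvPolynomial.X l)

/-- The generic rank `r_A` of the A-block. -/
noncomputable def genRankA (F : Type*) [Field F] {m p q n : ℕ}
    (pos : Fin n → BipPos m p q) : ℕ :=
  (patA pos (genericX F n)).rank

/-- The generic rank `r_B` of the B-block. -/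
noncomputable def genRankB (F : Type*) [Field F] {m p q n : ℕ}
    (pos : Fin n → BipPos m p q) : ℕ :=
  (patB pos (genericX F n)).rank

/-- The generic rank `r_M` of `M = [A | B]`. -/
noncomputable def genRankM (F : Type*) [Field F] {m p q n : ℕ}
    (pos : Fin n → BipPos m p q) : ℕ :=
  (patM pos (genericX F n)).rank

/-- Equivalence of bipartite matrices: `[A'|B'] = [S·A·R₁ | S·B·R₂]` with
`S, R₁, R₂` invertible. -/
def BipEquiv {F : Type*} [Field F] {m p q : ℕ}
    (A : Matrix (Fin m) (Fin p) F) (B : Matrix (Fin m) (Fin q) F)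
    (A' : Matrix (Fin m) (Fin p) F) (B' : Matrix (Fin m) (Fin q) F) : Prop :=
  ∃ (S : Matrix (Fin m) (Fin m) F) (R₁ : Matrix (Fin p) (Fin p) F)
    (R₂ : Matrix (Fin q) (Fin q) F),
    IsUnit S ∧ IsUnit R₁ ∧ IsUnit R₂ ∧ A' = S * A * R₁ ∧ B' = S * B * R₂

/-- The A-block of the canonical bipartite matrix `C(r,s,t)`:
`I_r` in rows `1..r`, columns `1..r`, and `I_s` in rows `r+1..r+s`,
columns `r+1..r+s`. -/
def canonA (F : Type*) [Field F] (m p r s : ℕ) : Matrix (Fin m) (Fin p) F :=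
  Matrix.of fun i j => if (i : ℕ) = (j : ℕ) ∧ (i : ℕ) < r + s then 1 else 0

/-- The B-block of the canonical bipartite matrix `C(r,s,t)`:
`I_r` in rows `1..r`, columns `t+1..t+r`, and `I_t` in rows `r+s+1..r+s+t`,
columns `1..t`. -/
def canonB (F : Type*) [Field F] (m q r s t : ℕ) : Matrix (Fin m) (Fin q) F :=
  Matrix.of fun i k =>
    if ((i : ℕ) < r ∧ (k : ℕ) = t + (i : ℕ)) ∨
       (r + s ≤ (i : ℕ) ∧ (i : ℕ) < r + s + t ∧ (k : ℕ) + (r + s) = (i : ℕ)) then 1 else 0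

/-- A matchbox: a set of pattern positions, no two sharing a row index and no two
within the same block sharing a column index. -/
def IsMatchbox {m p q n : ℕ} (pos : Fin n → BipPos m p q) (S : Finset (Fin n)) : Prop :=
  ∀ l ∈ S, ∀ l' ∈ S, l ≠ l' →
    posRow (pos l) ≠ posRow (pos l') ∧ posCol (pos l) ≠ posCol (pos l')

/-- A left matchbox: a matchbox all of whose positions lie in the A-block. -/
def IsLeftMatchbox {m p q n : ℕ} (pos : Fin n → BipPos m p q) (S : Finset (Fin n)) : Prop :=
  IsMatchbox pos S ∧ ∀ l ∈ S, (pos l).isLeft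

/-- A right matchbox: a matchbox all of whose positions lie in the B-block. -/
def IsRightMatchbox {m p q n : ℕ} (pos : Fin n → BipPos m p q) (S : Finset (Fin n)) : Prop :=
  IsMatchbox pos S ∧ ∀ l ∈ S, (pos l).isRight

/-- A largest left matchbox. -/
def IsLargestLeft {m p q n : ℕ} (pos : Fin n → BipPos m p q) (S : Finset (Fin n)) : Prop :=
  IsLeftMatchbox pos S ∧ ∀ T : Finset (Fin n), IsLeftMatchbox pos T → T.card ≤ S.card

/-- A largest right matchbox. -/
def IsLargestRight {m p q n : ℕ} (pos : Fin n → BipPos m p q) (S : Finset (Fin n)) : Prop :=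
  IsRightMatchbox pos S ∧ ∀ T : Finset (Fin n), IsRightMatchbox pos T → T.card ≤ S.card

/-- The set of row indices met by the positions of `S`. -/
def rowSet {m p q n : ℕ} (pos : Fin n → BipPos m p q) (S : Finset (Fin n)) : Finset (Fin m) :=
  S.image fun l => posRow (pos l)

/-- `v(𝒜,ℬ)`: the number of row indices met by both `𝒜` and `ℬ`. -/
def vCommon {m p q n : ℕ} (pos : Fin n → BipPos m p q) (𝒜 ℬ : Finset (Fin n)) : ℕ :=
  (rowSet pos 𝒜 ∩ rowSet pos ℬ).card

/-- `𝒜 ⋓ ℬ`: `𝒜` together with those positions of `ℬ` whose row is not a row of `𝒜`. -/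
def mcup {m p q n : ℕ} (pos : Fin n → BipPos m p q) (𝒜 ℬ : Finset (Fin n)) : Finset (Fin n) :=
  𝒜 ∪ ℬ.filter fun l => posRow (pos l) ∉ rowSet pos 𝒜

/-- An optimal pair: a largest left matchbox and a largest right matchbox whose number of
common row indices is minimal among all such pairs. -/
def IsOptimalPair {m p q n : ℕ} (pos : Fin n → BipPos m p q) (𝒜 ℬ : Finset (Fin n)) : Prop :=
  IsLargestLeft pos 𝒜 ∧ IsLargestRight pos ℬ ∧
  ∀ 𝒜' ℬ' : Finset (Fin n), IsLargestLeft pos 𝒜' → IsLargestRight pos ℬ' →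
    vCommon pos 𝒜 ℬ ≤ vCommon pos 𝒜' ℬ'

/-- The characteristic vector `ε_S ∈ {0,1}ⁿ` of a set of labels. -/
def charVec (F : Type*) [Zero F] [One F] {n : ℕ} (S : Finset (Fin n)) : Fin n → F :=
  fun l => if l ∈ S then 1 else 0

/-- The minor `μ_S(x)` of `M(x)` on the rows and the columns met by the matchbox `S`
(as a polynomial; well defined up to sign, rows and columns being indexed by `S`). -/
noncomputable def minorX (F : Type*) [Field F] {m p q n : ℕ} (pos : Fin n → BipPos m p q)
    (S : Finset (Fin n)) : MvPolynomial (Fin n) F :=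
  (Matrix.of fun (l : S) (l' : S) =>
    patM pos (fun i => (MvPolynomial.X i : MvPolynomial (Fin n) F))
      (posRow (pos l)) (posCol (pos l'))).det

/-!
Evaluated at `ε_U`, a matchbox `S ⊆ U` whose columns carry no other label of `U` has an
identity minor, while every nonzero row of the block is a row of `S`; so the rank at `ε_U` is
`|S|`. Rank can only drop under specialization, and a nonzero minor of a pattern matrix has a
nonzero diagonal term, which is a matchbox. Hence the generic rank lies between the rank at
`ε_U` and the size of a largest matchbox, which settles the blocks `A` and `B`.

For `M`, a matchbox `C` splits into a left and a right part with disjoint rows. The row sets of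
left (right) matchboxes are the independent sets of rows of the generic block `A` (`B`), so each
part extends to a largest left (right) matchbox `𝒜'` (`ℬ'`) containing its rows. A row common
to `𝒜'` and `ℬ'` is then a new row of one of them, so minimality of `v` gives
`v(𝒜,ℬ) ≤ v(𝒜',ℬ') ≤ |𝒜| + |ℬ| - |C|`, while `|𝒜⋓ℬ| = |𝒜| + |ℬ| - v(𝒜,ℬ)`.
-/

open Function

namespace Matrix

variable {K : Type*} [Field K] {m n : Type*} [Fintype m] [Fintype n]

theorem exists_linearIndependent_rows (A : Matrix m n K) {k : ℕ} (hk : A.rank = k) :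
    ∃ f : Fin k → m, LinearIndependent K fun i => A (f i) := by
  obtain ⟨ι, a, ha, hspan, hli⟩ := exists_linearIndependent' K A.row
  have : Finite ι := Finite.of_injective a ha
  have : Fintype ι := Fintype.ofFinite ι
  have hcard : Fintype.card ι = k := by
    rw [← hk, rank_eq_finrank_span_row, ← hspan, finrank_span_eq_card hli]
  let e := (Fintype.equivFinOfCardEq hcard).symm
  exact ⟨a ∘ e, hli.comp e e.injective⟩

theorem exists_isUnit_submatrix (A : Matrix m n K) :
    ∃ (f : Fin A.rank → m) (g : Fin A.rank → n), IsUnit (A.submatrix f g) := by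
  obtain ⟨f, hf⟩ := A.exists_linearIndependent_rows rfl
  have hrank : (A.submatrix f id)ᵀ.rank = A.rank := by
    rw [rank_transpose, LinearIndependent.rank_matrix (M := A.submatrix f id) hf, Fintype.card_fin]
  obtain ⟨g, hg⟩ := (A.submatrix f id)ᵀ.exists_linearIndependent_rows hrank
  exact ⟨f, g, linearIndependent_cols_iff_isUnit.mp hg⟩

theorem exists_injective_apply_ne_zero (A : Matrix m n K) :
    ∃ (f : Fin A.rank → m) (g : Fin A.rank → n),
      Injective f ∧ Injective g ∧ ∀ i, A (f i) (g i) ≠ 0 := by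
  obtain ⟨f, g, hu⟩ := A.exists_isUnit_submatrix
  have hf : Injective f := fun i j h =>
    (linearIndependent_rows_iff_isUnit.mpr hu).injective (by ext k; simp [h])
  have hg : Injective g := fun i j h =>
    (linearIndependent_cols_iff_isUnit.mpr hu).injective (by ext k; simp [h])
  have hdet := (isUnit_iff_isUnit_det _).mp hu |>.ne_zero
  rw [det_apply] at hdet
  obtain ⟨σ, -, hσ⟩ := Finset.exists_ne_zero_of_sum_ne_zero hdet
  have hprod : ∏ i, A (f (σ i)) (g i) ≠ 0 := fun h => hσ (by simp [h])
  exact ⟨f ∘ σ, g, hf.comp σ.injective, hg,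
    fun i => Finset.prod_ne_zero_iff.mp hprod i (Finset.mem_univ i)⟩

theorem rank_map_le_rank_map_of_injective {R L : Type*} [CommRing R] [Field L]
    (P : Matrix m n R) (φ : R →+* K) {ψ : R →+* L} (hψ : Injective ψ) :
    (P.map φ).rank ≤ (P.map ψ).rank := by
  obtain ⟨f, g, hu⟩ := (P.map φ).exists_isUnit_submatrix
  have hdet : (P.submatrix f g).det ≠ 0 := fun h => by
    rw [submatrix_map, isUnit_iff_isUnit_det, ← RingHom.mapMatrix_apply, ← RingHom.map_det,
      h, map_zero] at hu
    exact not_isUnit_zero hu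
  calc (P.map φ).rank = ((P.map ψ).submatrix f g).rank := by
        rw [submatrix_map, rank_of_det_ne_zero, Fintype.card_fin]
        rwa [← RingHom.mapMatrix_apply, ← RingHom.map_det, ne_eq,
          map_eq_zero_iff ψ hψ]
    _ ≤ (P.map ψ).rank := rank_submatrix_le _ _ _

end Matrix

open Finset

section Pattern

variable {m p q n : ℕ}

def BipPos.mk (i : Fin m) : Fin p ⊕ Fin q → BipPos m p q
  | .inl j => .inl (i, j)
  | .inr k => .inr (i, k)

theorem BipPos.eq_mk_iff {x : BipPos m p q} {i : Fin m} {c : Fin p ⊕ Fin q} :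
    x = BipPos.mk i c ↔ posRow x = i ∧ posCol x = c := by
  rcases x with ⟨i', j'⟩ | ⟨i', k'⟩ <;> rcases c with j | k <;>
    simp [BipPos.mk, posRow, posCol, and_comm]

theorem posCol_mem_range_inl_iff (x : BipPos m p q) :
    posCol x ∈ Set.range Sum.inl ↔ x.isLeft := by
  rcases x with x | x <;> simp [posCol]

theorem posCol_mem_range_inr_iff (x : BipPos m p q) :
    posCol x ∈ Set.range Sum.inr ↔ x.isRight := by
  rcases x with x | x <;> simp [posCol]

variable (pos : Fin n → BipPos m p q)

theorem patM_apply {R : Type*} [CommRing R] (a : Fin n → R) (i : Fin m) (c : Fin p ⊕ Fin q) :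
    patM pos a i c = ∑ l, if pos l = BipPos.mk i c then a l else 0 := by
  cases c <;> rfl

theorem patM_map {R S : Type*} [CommRing R] [CommRing S] (φ : R →+* S) (a : Fin n → R) :
    (patM pos a).map φ = patM pos (φ ∘ a) := by
  ext i c
  simp only [Matrix.map_apply, patM_apply, map_sum, apply_ite φ, map_zero, Function.comp_apply]

theorem exists_eq_mk_of_patM_ne_zero {R : Type*} [CommRing R] {a : Fin n → R} {i : Fin m}
    {c : Fin p ⊕ Fin q} (h : patM pos a i c ≠ 0) : ∃ l, pos l = BipPos.mk i c := by
  by_contra! hno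
  simp [patM_apply, hno] at h

theorem patM_charVec_apply (F : Type*) [Field F] (U : Finset (Fin n)) (i : Fin m)
    (c : Fin p ⊕ Fin q) :
    patM pos (charVec F U) i c = (#{u ∈ U | pos u = BipPos.mk i c} : F) := by
  rw [patM_apply, natCast_card_filter, ← univ_inter U, ← sum_ite_mem]
  refine sum_congr rfl fun u _ => ?_
  by_cases hu : u ∈ U <;> simp [charVec, hu]

end Pattern

section Matchbox

variable {m p q n : ℕ} (pos : Fin n → BipPos m p q)

def IsMatchboxOn {ι κ : Type*} (r : ι → Fin m) (c : κ → Fin p ⊕ Fin q) (S : Finset (Fin n)) :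
    Prop :=
  IsMatchbox pos S ∧ ∀ l ∈ S, posRow (pos l) ∈ Set.range r ∧ posCol (pos l) ∈ Set.range c

variable {pos} {S T : Finset (Fin n)}

theorem IsMatchbox.injOn_row (h : IsMatchbox pos S) :
    Set.InjOn (fun l => posRow (pos l)) S :=
  fun _ hx _ hy hxy => by_contra fun hne => (h _ hx _ hy hne).1 hxy

theorem IsMatchbox.injOn_col (h : IsMatchbox pos S) :
    Set.InjOn (fun l => posCol (pos l)) S :=
  fun _ hx _ hy hxy => by_contra fun hne => (h _ hx _ hy hne).2 hxy

theorem IsMatchbox.of_injOn (hr : Set.InjOn (fun l => posRow (pos l)) S)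
    (hc : Set.InjOn (fun l => posCol (pos l)) S) : IsMatchbox pos S :=
  fun _ hl _ hl' hne => ⟨fun h => hne (hr hl hl' h), fun h => hne (hc hl hl' h)⟩

theorem IsMatchbox.mono (h : IsMatchbox pos S) (hT : T ⊆ S) : IsMatchbox pos T :=
  fun l hl l' hl' => h l (hT hl) l' (hT hl')

theorem IsMatchbox.card_rowSet (h : IsMatchbox pos S) : #(rowSet pos S) = #S :=
  card_image_of_injOn h.injOn_row

theorem isMatchbox_iff_isMatchboxOn : IsMatchbox pos S ↔ IsMatchboxOn pos id id S := by
  simp [IsMatchboxOn]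

theorem isLeftMatchbox_iff_isMatchboxOn :
    IsLeftMatchbox pos S ↔ IsMatchboxOn pos id Sum.inl S := by
  simp only [IsLeftMatchbox, IsMatchboxOn, Set.range_id, Set.mem_univ, true_and,
    posCol_mem_range_inl_iff]

theorem isRightMatchbox_iff_isMatchboxOn :
    IsRightMatchbox pos S ↔ IsMatchboxOn pos id Sum.inr S := by
  simp only [IsRightMatchbox, IsMatchboxOn, Set.range_id, Set.mem_univ, true_and,
    posCol_mem_range_inr_iff]

end Matchbox

section PatternRank

variable {m p q n : ℕ} (pos : Fin n → BipPos m p q) {ι κ : Type*} {r : ι → Fin m}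
  {c : κ → Fin p ⊕ Fin q}

theorem exists_isMatchboxOn_card_eq_rank [Fintype ι] [Fintype κ] {K : Type*} [Field K]
    (a : Fin n → K) (hr : Injective r) (hc : Injective c) :
    ∃ S, IsMatchboxOn pos r c S ∧ #S = ((patM pos a).submatrix r c).rank := by
  obtain ⟨f, g, hf, hg, hne⟩ := ((patM pos a).submatrix r c).exists_injective_apply_ne_zero
  choose ℓ hℓ using fun i => exists_eq_mk_of_patM_ne_zero pos (hne i)
  simp only [BipPos.eq_mk_iff] at hℓ
  have hinj : Injective ℓ := fun i j h => hg (hc (by rw [← (hℓ i).2, ← (hℓ j).2, h]))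
  refine ⟨univ.image ℓ, ⟨fun x hx y hy hxy => ?_, ?_⟩, ?_⟩
  · obtain ⟨i, -, rfl⟩ := mem_image.mp hx
    obtain ⟨j, -, rfl⟩ := mem_image.mp hy
    have hij : i ≠ j := fun h => hxy (h ▸ rfl)
    rw [(hℓ i).1, (hℓ j).1, (hℓ i).2, (hℓ j).2]
    exact ⟨hr.ne (hf.ne hij), hc.ne (hg.ne hij)⟩
  · simp only [mem_image, mem_univ, true_and, forall_exists_index, forall_apply_eq_imp_iff]
    exact fun i => ⟨⟨f i, (hℓ i).1.symm⟩, ⟨g i, (hℓ i).2.symm⟩⟩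
  · rw [card_image_of_injective _ hinj, card_univ, Fintype.card_fin]

variable (F : Type*) [Field F]

theorem card_le_rank_patM_charVec [Fintype κ] {S U : Finset (Fin n)}
    (hS : IsMatchboxOn pos r c S) (hSU : S ⊆ U) (hU : Set.InjOn (fun l => posCol (pos l)) U) :
    #S ≤ ((patM pos (charVec F U)).submatrix r c).rank := by
  choose ρ hρ using fun l : S => (hS.2 l l.2).1
  choose γ hγ using fun l : S => (hS.2 l l.2).2
  have hone : ((patM pos (charVec F U)).submatrix r c).submatrix ρ γ = 1 := by
    ext l l'
    have hfilter : {u ∈ U | pos u = BipPos.mk (posRow (pos l)) (posCol (pos l'))} =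
        if l = l' then {l'.1} else ∅ := by
      ext u
      simp only [mem_filter, BipPos.eq_mk_iff]
      constructor
      · rintro ⟨hu, hrow, hcol⟩
        obtain rfl : u = l' := hU hu (hSU l'.2) hcol
        obtain rfl : l = l' := Subtype.ext (hS.1.injOn_row l.2 l'.2 hrow.symm)
        simp
      · split_ifs with h
        · rintro hu
          rw [mem_singleton.mp hu, h]
          exact ⟨hSU l'.2, rfl, rfl⟩
        · simp
    rw [submatrix_apply, submatrix_apply, hρ, hγ, patM_charVec_apply, one_apply, hfilter]
    split_ifs <;> simp
  calc #S = (1 : Matrix S S F).rank := by rw [rank_one, Fintype.card_coe]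
    _ ≤ _ := hone ▸ rank_submatrix_le _ _ _

theorem rank_patM_charVec_le [Fintype κ] (c : κ → Fin p ⊕ Fin q) (U : Finset (Fin n))
    (I : Finset (Fin m))
    (hI : ∀ u ∈ U, posCol (pos u) ∈ Set.range c → posRow (pos u) ∈ I) :
    ((patM pos (charVec F U)).submatrix id c).rank ≤ #I := by
  refine rank_le_card_of_support_subset _ _ fun i hi => ?_
  obtain ⟨j, hj⟩ : ∃ j, patM pos (charVec F U) i (c j) ≠ 0 := by
    by_contra! h
    exact hi (funext h)
  obtain ⟨u, hu⟩ : {u ∈ U | pos u = BipPos.mk i (c j)}.Nonempty := by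
    rw [nonempty_iff_ne_empty]
    intro h
    simp [patM_charVec_apply, h] at hj
  rw [mem_filter, BipPos.eq_mk_iff] at hu
  exact hu.2.1 ▸ hI u hu.1 (hu.2.2 ▸ ⟨j, rfl⟩)

theorem rank_patM_charVec_le_rank_genericX [Fintype ι] [Fintype κ] (U : Finset (Fin n))
    (r : ι → Fin m) (c : κ → Fin p ⊕ Fin q) :
    ((patM pos (charVec F U)).submatrix r c).rank ≤
      ((patM pos (genericX F n)).submatrix r c).rank := by
  have hspec : patM pos (charVec F U) = (patM pos MvPolynomial.X).map
      (MvPolynomial.eval (charVec F U)) := by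
    rw [patM_map]
    congr
    funext l
    simp
  have hgen : patM pos (genericX F n) = (patM pos MvPolynomial.X).map
      (algebraMap (MvPolynomial (Fin n) F) (FractionRing (MvPolynomial (Fin n) F))) := by
    rw [patM_map]
    rfl
  rw [hspec, hgen, submatrix_map, submatrix_map]
  exact rank_map_le_rank_map_of_injective _ _
    (IsFractionRing.injective (MvPolynomial (Fin n) F) (FractionRing (MvPolynomial (Fin n) F)))

theorem rank_patM_charVec_eq_card_eq_rank_genericX [Fintype κ] (hc : Injective c)
    {S U : Finset (Fin n)} (hS : IsMatchboxOn pos id c S)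
    (hmax : ∀ T, IsMatchboxOn pos id c T → #T ≤ #S)
    (hSU : S ⊆ U) (hU : Set.InjOn (fun l => posCol (pos l)) U)
    (hrow : ∀ u ∈ U, posCol (pos u) ∈ Set.range c → posRow (pos u) ∈ rowSet pos S) :
    ((patM pos (charVec F U)).submatrix id c).rank = #S ∧
      #S = ((patM pos (genericX F n)).submatrix id c).rank := by
  have hlow := card_le_rank_patM_charVec pos F hS hSU hU
  have hup := (rank_patM_charVec_le pos F c U _ hrow).trans hS.1.card_rowSet.le
  have hspec := rank_patM_charVec_le_rank_genericX pos F U id c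
  obtain ⟨T, hT, hTcard⟩ := exists_isMatchboxOn_card_eq_rank pos (genericX F n) injective_id hc
  have := hmax T hT
  omega

end PatternRank

section Augmentation

variable {m p q n : ℕ} {pos : Fin n → BipPos m p q} {κ : Type*} [Fintype κ]
  {c : κ → Fin p ⊕ Fin q}

theorem IsMatchboxOn.linearIndepOn_rowSet (F : Type*) [Field F] {S : Finset (Fin n)}
    (hS : IsMatchboxOn pos id c S) :
    LinearIndepOn (FractionRing (MvPolynomial (Fin n) F))
      ((patM pos (genericX F n)).submatrix id c) (rowSet pos S : Set (Fin m)) := by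
  have hS' : IsMatchboxOn pos (Subtype.val : rowSet pos S → Fin m) c S :=
    ⟨hS.1, fun l hl => ⟨⟨⟨_, mem_image_of_mem _ hl⟩, rfl⟩, (hS.2 l hl).2⟩⟩
  have hrank := (card_le_rank_patM_charVec pos F hS' subset_rfl hS.1.injOn_col).trans
    (rank_patM_charVec_le_rank_genericX pos F S _ c)
  rw [rank_eq_finrank_span_row] at hrank
  refine linearIndependent_iff_card_le_finrank_span.mpr ?_
  refine le_of_eq_of_le ?_ hrank
  exact (Fintype.card_coe _).trans hS.1.card_rowSet

theorem exists_isMatchboxOn_rowSet_eq (F : Type*) [Field F] (hc : Injective c)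
    {I : Finset (Fin m)}
    (hI : LinearIndepOn (FractionRing (MvPolynomial (Fin n) F))
      ((patM pos (genericX F n)).submatrix id c) (I : Set (Fin m))) :
    ∃ S, IsMatchboxOn pos id c S ∧ rowSet pos S = I := by
  obtain ⟨S, hS, hcard⟩ :=
    exists_isMatchboxOn_card_eq_rank pos (genericX F n) (Subtype.val_injective (p := (· ∈ I))) hc
  have hrank : ((patM pos (genericX F n)).submatrix (Subtype.val : I → Fin m) c).rank = #I := by
    rw [LinearIndependent.rank_matrix (M := (patM pos (genericX F n)).submatrix
      (Subtype.val : I → Fin m) c) hI, Fintype.card_coe]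
  have hsub : rowSet pos S ⊆ I := by
    intro i hi
    obtain ⟨l, hl, rfl⟩ := mem_image.mp hi
    obtain ⟨⟨j, hj⟩, hjl⟩ := (hS.2 l hl).1
    exact hjl ▸ hj
  refine ⟨S, ⟨hS.1, fun l hl => ⟨⟨_, rfl⟩, (hS.2 l hl).2⟩⟩, eq_of_subset_of_card_le hsub ?_⟩
  rw [hS.1.card_rowSet, hcard, hrank]

/-- The row sets of the matchboxes within the columns `c` are the independent sets of rows of
the generic matrix, so they satisfy the augmentation property of a matroid. -/
theorem IsMatchboxOn.exists_rowSet_subset (hc : Injective c) {C T : Finset (Fin n)}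
    (hC : IsMatchboxOn pos id c C) (hT : IsMatchboxOn pos id c T) :
    ∃ C', IsMatchboxOn pos id c C' ∧ rowSet pos C ⊆ rowSet pos C' ∧ #T ≤ #C' := by
  obtain ⟨b, hbt, hCb, hspan, hb⟩ :=
    exists_linearIndepOn_extension (hC.linearIndepOn_rowSet ℚ)
      (Set.subset_union_left (t := (rowSet pos T : Set (Fin m))))
  obtain ⟨B, rfl⟩ := ((rowSet pos C ∪ rowSet pos T).finite_toSet.subset
    (by simpa using hbt)).exists_finset_coe
  obtain ⟨C', hC', hrows⟩ := exists_isMatchboxOn_rowSet_eq ℚ hc hb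
  refine ⟨C', hC', hrows ▸ coe_subset.mp hCb, ?_⟩
  have hle : (rowSet pos T : Set (Fin m)).encard ≤ (B : Set (Fin m)).encard := by
    rw [← toENat_rank_span_set (hT.linearIndepOn_rowSet ℚ), ← toENat_rank_span_set hb]
    exact Cardinal.toENat.monotone' (Submodule.rank_mono
      (Submodule.span_le.mpr ((Set.image_mono Set.subset_union_right).trans hspan)))
  rw [← hT.1.card_rowSet, ← hC'.1.card_rowSet, hrows]
  exact_mod_cast hle

end Augmentation

theorem Finset.card_inter_add_card_add_card_le {α : Type*} [DecidableEq α]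
    {I I' J J' : Finset α} (hI : I ⊆ J) (hI' : I' ⊆ J') (h : Disjoint I I') :
    #(J ∩ J') + #I + #I' ≤ #J + #J' := by
  have hsub : J ∩ J' ⊆ (J \ I) ∪ (J' \ I') := by
    intro x hx
    rw [mem_inter] at hx
    by_cases hxI : x ∈ I
    · exact mem_union_right _ (mem_sdiff.mpr ⟨hx.2, disjoint_left.mp h hxI⟩)
    · exact mem_union_left _ (mem_sdiff.mpr ⟨hx.1, hxI⟩)
  have := (card_le_card hsub).trans (card_union_le _ _)
  rw [card_sdiff_of_subset hI, card_sdiff_of_subset hI'] at this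
  have := card_le_card hI
  have := card_le_card hI'
  omega

section OptimalPair

variable {m p q n : ℕ} {pos : Fin n → BipPos m p q} {𝒜 ℬ : Finset (Fin n)}

theorem injOn_posCol_union (h𝒜 : IsLeftMatchbox pos 𝒜) (hℬ : IsRightMatchbox pos ℬ) :
    Set.InjOn (fun l => posCol (pos l)) (𝒜 ∪ ℬ : Finset (Fin n)) := by
  have hmixed : ∀ x ∈ 𝒜, ∀ y ∈ ℬ, posCol (pos x) ≠ posCol (pos y) := fun x hx y hy hxy =>
    Sum.not_isLeft.mpr (hℬ.2 y hy)
      ((posCol_mem_range_inl_iff _).mp (hxy ▸ (posCol_mem_range_inl_iff _).mpr (h𝒜.2 x hx)))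
  rw [coe_union,
    Set.injOn_union (Set.disjoint_left.mpr fun l h𝒜l hℬl => hmixed l h𝒜l l hℬl rfl)]
  exact ⟨h𝒜.1.injOn_col, hℬ.1.injOn_col, hmixed⟩

theorem mem_left_of_mem_union (hℬ : IsRightMatchbox pos ℬ) {u : Fin n} (hu : u ∈ 𝒜 ∪ ℬ)
    (hleft : (pos u).isLeft) : u ∈ 𝒜 :=
  (mem_union.mp hu).resolve_right fun h => Sum.not_isLeft.mpr (hℬ.2 u h) hleft

theorem mem_right_of_mem_union (h𝒜 : IsLeftMatchbox pos 𝒜) {u : Fin n} (hu : u ∈ 𝒜 ∪ ℬ)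
    (hright : (pos u).isRight) : u ∈ ℬ :=
  (mem_union.mp hu).resolve_left fun h => Sum.not_isLeft.mpr hright (h𝒜.2 u h)

theorem mcup_subset_union : mcup pos 𝒜 ℬ ⊆ 𝒜 ∪ ℬ :=
  union_subset_union subset_rfl (filter_subset _ _)

theorem rowSet_mcup : rowSet pos (mcup pos 𝒜 ℬ) = rowSet pos (𝒜 ∪ ℬ) := by
  refine (image_subset_image mcup_subset_union).antisymm fun i hi => ?_
  obtain ⟨l, hl, rfl⟩ := mem_image.mp hi
  by_cases h : posRow (pos l) ∈ rowSet pos 𝒜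
  · exact image_subset_image subset_union_left h
  · refine mem_image_of_mem _ (mem_union_right _ (mem_filter.mpr ⟨?_, h⟩))
    exact (mem_union.mp hl).resolve_left fun h𝒜 => h (mem_image_of_mem _ h𝒜)

theorem isMatchbox_mcup (h𝒜 : IsLeftMatchbox pos 𝒜) (hℬ : IsRightMatchbox pos ℬ) :
    IsMatchbox pos (mcup pos 𝒜 ℬ) := by
  refine .of_injOn ?_ ((injOn_posCol_union h𝒜 hℬ).mono (coe_subset.mpr mcup_subset_union))
  have hnew : ∀ x ∈ 𝒜, ∀ y ∈ ℬ.filter (fun l => posRow (pos l) ∉ rowSet pos 𝒜),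
      posRow (pos x) ≠ posRow (pos y) :=
    fun x hx y hy hxy => (mem_filter.mp hy).2 (hxy ▸ mem_image_of_mem _ hx)
  rw [mcup, coe_union,
    Set.injOn_union (Set.disjoint_left.mpr fun l hl hl' => hnew l hl l hl' rfl)]
  exact ⟨h𝒜.1.injOn_row, hℬ.1.injOn_row.mono (coe_subset.mpr (filter_subset _ _)), hnew⟩

theorem card_mcup_add_vCommon (h𝒜 : IsLeftMatchbox pos 𝒜) (hℬ : IsRightMatchbox pos ℬ) :
    #(mcup pos 𝒜 ℬ) + vCommon pos 𝒜 ℬ = #𝒜 + #ℬ := by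
  rw [vCommon, ← (isMatchbox_mcup h𝒜 hℬ).card_rowSet, rowSet_mcup,
    show rowSet pos (𝒜 ∪ ℬ) = rowSet pos 𝒜 ∪ rowSet pos ℬ from image_union _ _,
    card_union_add_card_inter, h𝒜.1.card_rowSet, hℬ.1.card_rowSet]

theorem IsOptimalPair.card_le_card_mcup (hopt : IsOptimalPair pos 𝒜 ℬ) {C : Finset (Fin n)}
    (hC : IsMatchbox pos C) : #C ≤ #(mcup pos 𝒜 ℬ) := by
  obtain ⟨⟨h𝒜, h𝒜max⟩, ⟨hℬ, hℬmax⟩, hmin⟩ := hopt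
  set CA := C.filter fun l => (pos l).isLeft
  set CB := C.filter fun l => ¬(pos l).isLeft
  have hCA : IsMatchboxOn pos id Sum.inl CA := isLeftMatchbox_iff_isMatchboxOn.mp
    ⟨hC.mono (filter_subset _ _), fun l hl => (mem_filter.mp hl).2⟩
  have hCB : IsMatchboxOn pos id Sum.inr CB := isRightMatchbox_iff_isMatchboxOn.mp
    ⟨hC.mono (filter_subset _ _), fun l hl => Sum.not_isLeft.mp (mem_filter.mp hl).2⟩
  obtain ⟨𝒜', h𝒜', hCA𝒜', h𝒜𝒜'⟩ :=
    hCA.exists_rowSet_subset Sum.inl_injective (isLeftMatchbox_iff_isMatchboxOn.mp h𝒜)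
  obtain ⟨ℬ', hℬ', hCBℬ', hℬℬ'⟩ :=
    hCB.exists_rowSet_subset Sum.inr_injective (isRightMatchbox_iff_isMatchboxOn.mp hℬ)
  rw [← isLeftMatchbox_iff_isMatchboxOn] at h𝒜'
  rw [← isRightMatchbox_iff_isMatchboxOn] at hℬ'
  have hv := hmin 𝒜' ℬ' ⟨h𝒜', fun T hT => (h𝒜max T hT).trans h𝒜𝒜'⟩
    ⟨hℬ', fun T hT => (hℬmax T hT).trans hℬℬ'⟩
  have hdisj : Disjoint (rowSet pos CA) (rowSet pos CB) := by
    refine disjoint_left.mpr fun i hiA hiB => ?_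
    obtain ⟨a, ha, rfl⟩ := mem_image.mp hiA
    obtain ⟨b, hb, hab⟩ := mem_image.mp hiB
    obtain rfl := hC.injOn_row (filter_subset _ _ hb) (filter_subset _ _ ha) hab
    exact (mem_filter.mp hb).2 (mem_filter.mp ha).2
  have hrows := card_inter_add_card_add_card_le hCA𝒜' hCBℬ' hdisj
  rw [hCA.1.card_rowSet, hCB.1.card_rowSet, h𝒜'.1.card_rowSet, hℬ'.1.card_rowSet] at hrows
  have hsplit : #CA + #CB = #C := card_filter_add_card_filter_not _
  have := card_mcup_add_vCommon h𝒜 hℬ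
  have := h𝒜max 𝒜' h𝒜'
  have := hℬmax ℬ' hℬ'
  simp only [vCommon] at *
  omega

end OptimalPair

theorem stmt_13_general (F : Type*) [Field F] (m p q n : ℕ) (pos : Fin n → BipPos m p q)
    (𝒜 ℬ : Finset (Fin n))
    (hopt : IsOptimalPair pos 𝒜 ℬ) :
    ((patA pos (charVec F (𝒜 ∪ ℬ))).rank = 𝒜.card ∧ 𝒜.card = genRankA F pos) ∧
    ((patB pos (charVec F (𝒜 ∪ ℬ))).rank = ℬ.card ∧ ℬ.card = genRankB F pos) ∧
    ((patM pos (charVec F (𝒜 ∪ ℬ))).rank = (mcup pos 𝒜 ℬ).card ∧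
      (mcup pos 𝒜 ℬ).card = genRankM F pos) := by
  obtain ⟨⟨h𝒜, h𝒜max⟩, ⟨hℬ, hℬmax⟩, -⟩ := id hopt
  have hU := injOn_posCol_union h𝒜 hℬ
  refine ⟨?_, ?_, ?_⟩
  · exact rank_patM_charVec_eq_card_eq_rank_genericX pos F Sum.inl_injective
      (isLeftMatchbox_iff_isMatchboxOn.mp h𝒜)
      (fun T hT => h𝒜max T (isLeftMatchbox_iff_isMatchboxOn.mpr hT)) subset_union_left hU
      fun u hu hcol => mem_image_of_mem _
        (mem_left_of_mem_union hℬ hu ((posCol_mem_range_inl_iff _).mp hcol))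
  · exact rank_patM_charVec_eq_card_eq_rank_genericX pos F Sum.inr_injective
      (isRightMatchbox_iff_isMatchboxOn.mp hℬ)
      (fun T hT => hℬmax T (isRightMatchbox_iff_isMatchboxOn.mpr hT)) subset_union_right hU
      fun u hu hcol => mem_image_of_mem _
        (mem_right_of_mem_union h𝒜 hu ((posCol_mem_range_inr_iff _).mp hcol))
  · exact rank_patM_charVec_eq_card_eq_rank_genericX pos F injective_id
      (isMatchbox_iff_isMatchboxOn.mp (isMatchbox_mcup h𝒜 hℬ))
      (fun T hT => hopt.card_le_card_mcup (isMatchbox_iff_isMatchboxOn.mpr hT))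
      mcup_subset_union hU fun u hu _ => by
        rw [rowSet_mcup]
        exact mem_image_of_mem _ hu

/-- equations (21)–(22) of the paper: for an optimal pair `(𝒜, ℬ)`
of largest matchboxes, `rank A(ε_{𝒜∪ℬ}) = |𝒜| = r_A`, `rank B(ε_{𝒜∪ℬ}) = |ℬ| = r_B`,
and `rank M(ε_{𝒜∪ℬ}) = |𝒜⋓ℬ| = r_M` (ranks over `F`). -/
theorem stmt_13 (F : Type*) [Field F] (m p q n : ℕ) (pos : Fin n → BipPos m p q)
    (hpos : Function.Injective pos) (𝒜 ℬ : Finset (Fin n))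
    (hopt : IsOptimalPair pos 𝒜 ℬ) :
    ((patA pos (charVec F (𝒜 ∪ ℬ))).rank = 𝒜.card ∧ 𝒜.card = genRankA F pos) ∧
    ((patB pos (charVec F (𝒜 ∪ ℬ))).rank = ℬ.card ∧ ℬ.card = genRankB F pos) ∧
    ((patM pos (charVec F (𝒜 ∪ ℬ))).rank = (mcup pos 𝒜 ℬ).card ∧
      (mcup pos 𝒜 ℬ).card = genRankM F pos) :=
  stmt_13_general F m p q n pos 𝒜 ℬ hopt
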